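/- arXiv:2309.13808 — 4 statements merged into one kernel-verified Lean document; each statement's English description precedes it below -/
import Mathlib

section
/- For every valid non-initial composite state σ of the asynchronous muddy-children protocol, consistent(σ) holds, i.e., the union M of the observation sets of the components is nonempty and the observation set of every component i equals M \ {i}. -/
/-- Epistemic status of a child: unknown, muddy, or clean. -/
inductive Status : Type
  | u | m | c

/-- A message ⟨j, r, status⟩. -/
structure Msg (n : ℕ) : Type where
  sender : Fin n
  round : ℕ
  status : Status

/-- A child's state: initial ⟨Obs⟩ or running ⟨Obs, r, status⟩. -/
inductive ChildState (n : ℕ) : Type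
  | start (Obs : Finset (Fin n))
  | run (Obs : Finset (Fin n)) (r : ℕ) (st : Status)

open Status ChildState

/-- Observation set of a child state. -/
def ChildState.obs {n : ℕ} : ChildState n → Finset (Fin n)
  | .start O => O
  | .run O _ _ => O

/-- A composite state. -/
abbrev CState (n : ℕ) := Fin n → ChildState n

/-- The set M of muddy children determined by a composite state. -/
def muddySet {n : ℕ} (σ : CState n) : Finset (Fin n) :=
  Finset.univ.biUnion fun i => (σ i).obs

/-- consistent(σ): M nonempty and every child sees exactly M \ {i}. -/
def consistent {n : ℕ} (σ : CState n) : Prop :=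
  (muddySet σ).Nonempty ∧ ∀ i, (σ i).obs = muddySet σ \ {i}

/-- The constrained local transitions of child `i` (labels init/emit/receive). -/
inductive LocalStep {n : ℕ} (i : Fin n) :
    ChildState n → Option (Msg n) → ChildState n → Option (Msg n) → Prop
  | init_nonempty (O : Finset (Fin n)) (h : O ≠ ∅) :
      LocalStep i (start O) none (run O 0 u) none
  | init_empty (O : Finset (Fin n)) (h : O = ∅) :
      LocalStep i (start O) none (run O 0 m) none
  | emit (O : Finset (Fin n)) (r : ℕ) (s : Status) :
      LocalStep i (run O r s) none (run O r s) (some ⟨i, r, s⟩)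
  | recv_decided (O : Finset (Fin n)) (r : ℕ) (s : Status) (mg : Msg n) (h : s ≠ u) :
      LocalStep i (run O r s) (some mg) (run O r s) none
  | recv_c_eq (O : Finset (Fin n)) (r : ℕ) (j : Fin n) (r' : ℕ)
      (hj : j ∉ O) (hr : r' = O.card) :
      LocalStep i (run O r u) (some ⟨j, r', c⟩) (run O r' c) none
  | recv_c_succ (O : Finset (Fin n)) (r : ℕ) (j : Fin n) (r' : ℕ)
      (hj : j ∉ O) (hr : r' = O.card + 1) :
      LocalStep i (run O r u) (some ⟨j, r', c⟩) (run O (r' - 1) m) none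
  | recv_m_eq (O : Finset (Fin n)) (r : ℕ) (j : Fin n) (r' : ℕ)
      (hj : j ∈ O) (hr : r' = O.card) :
      LocalStep i (run O r u) (some ⟨j, r', m⟩) (run O r' m) none
  | recv_m_pred (O : Finset (Fin n)) (r : ℕ) (j : Fin n) (r' : ℕ)
      (hj : j ∈ O) (hr : r' = O.card - 1) :
      LocalStep i (run O r u) (some ⟨j, r', m⟩) (run O (r' + 1) c) none
  | recv_u_in_lt (O : Finset (Fin n)) (r : ℕ) (j : Fin n) (r' : ℕ)
      (hj : j ∈ O) (hr : r' < r) :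
      LocalStep i (run O r u) (some ⟨j, r', u⟩) (run O r u) none
  | recv_u_in_mid (O : Finset (Fin n)) (r : ℕ) (j : Fin n) (r' : ℕ)
      (hj : j ∈ O) (h1 : r ≤ r') (h2 : r' < O.card - 1) :
      LocalStep i (run O r u) (some ⟨j, r', u⟩) (run O (r' + 1) u) none
  | recv_u_in_top (O : Finset (Fin n)) (r : ℕ) (j : Fin n) (r' : ℕ)
      (hj : j ∈ O) (hr : r' = O.card - 1) :
      LocalStep i (run O r u) (some ⟨j, r', u⟩) (run O (r' + 1) m) none
  | recv_u_out_le (O : Finset (Fin n)) (r : ℕ) (j : Fin n) (r' : ℕ)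
      (hj : j ∉ O) (hr : r' ≤ r) :
      LocalStep i (run O r u) (some ⟨j, r', u⟩) (run O r u) none
  | recv_u_out_mid (O : Finset (Fin n)) (r : ℕ) (j : Fin n) (r' : ℕ)
      (hj : j ∉ O) (h1 : r < r') (h2 : r' < O.card) :
      LocalStep i (run O r u) (some ⟨j, r', u⟩) (run O r' u) none
  | recv_u_out_top (O : Finset (Fin n)) (r : ℕ) (j : Fin n) (r' : ℕ)
      (hj : j ∉ O) (hr : r' = O.card) :
      LocalStep i (run O r u) (some ⟨j, r', u⟩) (run O r' m) none

/-- The no-equivocation condition on an input message: the sender must be in a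
running state matching the message (or a state strictly ahead of an unknown-status message). -/
def senderOK {n : ℕ} (σ : CState n) (mg : Msg n) : Prop :=
  ∃ (O : Finset (Fin n)) (rj : ℕ) (sj : Status),
    σ mg.sender = run O rj sj ∧
      ((mg.status = sj ∧ mg.round = rj) ∨ (mg.status = u ∧ mg.round < rj))

/-- The composition constraint: init transitions require consistency of the
composite state, receives require the no-equivocation condition. -/
def stepConstraint {n : ℕ} (σ : CState n) (i : Fin n) (inp : Option (Msg n)) : Prop :=
  ((∃ O, σ i = start O) → consistent σ) ∧ ∀ mg, inp = some mg → senderOK σ mg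

/-- Constrained transitions of the composite system: component `i` takes a local
transition, subject to the composition constraint. -/
inductive CStep {n : ℕ} :
    CState n → Fin n → Option (Msg n) → CState n → Option (Msg n) → Prop
  | mk (σ : CState n) (i : Fin n) (inp : Option (Msg n)) (s' : ChildState n)
      (out : Option (Msg n))
      (hl : LocalStep i (σ i) inp s' out) (hc : stepConstraint σ i inp) :
      CStep σ i inp (Function.update σ i s') out

/-- A recorded transition: acting component, input message, output message. -/
abbrev Transition (n : ℕ) := Fin n × Option (Msg n) × Option (Msg n)

/-- A composite state is initial when all components are in initial states. -/
def isInitial {n : ℕ} (σ : CState n) : Prop := ∀ i, ∃ O, σ i = start O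

/-- The trace `tr` emits the message `mg`. -/
def emits {n : ℕ} (tr : List (Transition n)) (mg : Msg n) : Prop :=
  ∃ i inp, (i, inp, some mg) ∈ tr

/-- The message `mg` is an input of some transition of the trace `tr`. -/
def isInput {n : ℕ} (tr : List (Transition n)) (mg : Msg n) : Prop :=
  ∃ i out, (i, some mg, out) ∈ tr

/-- Constrained traces: sequences of constrained transitions from `σ0`. -/
inductive ConstrainedTrace {n : ℕ} (σ0 : CState n) :
    List (Transition n) → CState n → Prop
  | nil : ConstrainedTrace σ0 [] σ0
  | snoc (tr : List (Transition n)) (σ : CState n) (i : Fin n)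
      (inp : Option (Msg n)) (σ' : CState n) (out : Option (Msg n))
      (htr : ConstrainedTrace σ0 tr σ)
      (hstep : CStep σ i inp σ' out) :
      ConstrainedTrace σ0 (tr ++ [(i, inp, out)]) σ'

/-- Valid messages from the initial composite state `σ0`: messages emitted by a
constrained trace from `σ0` all of whose input messages are themselves valid,
i.e., emitted by valid traces from `σ0`. -/
inductive ValidMsg {n : ℕ} (σ0 : CState n) : Msg n → Prop
  | intro (mg : Msg n) (tr : List (Transition n)) (σ : CState n)
      (h0 : isInitial σ0)
      (hct : ConstrainedTrace σ0 tr σ)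
      (hin : ∀ mg', isInput tr mg' → ValidMsg σ0 mg')
      (hem : emits tr mg) : ValidMsg σ0 mg

/-- Valid traces from `σ0`: constrained traces from an initial composite state
in which every input message can be emitted by some valid trace from `σ0`. -/
def ValidTrace {n : ℕ} (σ0 : CState n) (tr : List (Transition n)) (σ : CState n) : Prop :=
  isInitial σ0 ∧ ConstrainedTrace σ0 tr σ ∧ ∀ mg, isInput tr mg → ValidMsg σ0 mg

/-- Status of a running child state. -/
def ChildState.status? {n : ℕ} : ChildState n → Option Status
  | .start _ => none
  | .run _ _ s => some s

/-- A composite state is final when every component knows its status. -/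
def isFinal {n : ℕ} (σ : CState n) : Prop :=
  ∀ i, ∃ (O : Finset (Fin n)) (r : ℕ) (s : Status), σ i = run O r s ∧ s ≠ u

/-- Round of a child state, with initial states at round -1. -/
def roundZ {n : ℕ} : ChildState n → ℤ
  | .start _ => -1
  | .run _ r _ => (r : ℤ)

lemma LocalStep.obs_eq {n : ℕ} {i : Fin n} {s s' : ChildState n}
    {inp out : Option (Msg n)} (h : LocalStep i s inp s' out) :
    s'.obs = s.obs := by cases h <;> rfl

lemma CStep.obs_eq {n : ℕ} {σ σ' : CState n} {i : Fin n} {inp out : Option (Msg n)}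
    (h : CStep σ i inp σ' out) : ∀ j, (σ' j).obs = (σ j).obs := by
  obtain ⟨s', hc, hl⟩ := h
  intro j
  by_cases hj : j = i
  · subst hj; simp [Function.update_self, hl.obs_eq]
  · simp [Function.update_of_ne hj]

lemma consistent_congr {n : ℕ} {σ σ' : CState n} (h : ∀ j, (σ' j).obs = (σ j).obs) :
    consistent σ → consistent σ' := by
  rintro ⟨h1, h2⟩
  have hm : muddySet σ' = muddySet σ := by
    unfold muddySet
    exact Finset.biUnion_congr rfl (fun i _ => h i)
  exact ⟨hm ▸ h1, fun i => by rw [h i, hm]; exact h2 i⟩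

lemma CStep.constraint {n : ℕ} {σ σ' : CState n} {i : Fin n} {inp out : Option (Msg n)}
    (h : CStep σ i inp σ' out) : stepConstraint σ i inp := by
  cases h; assumption

lemma consistent_of_trace {n : ℕ} {σ0 σ : CState n} {tr : List (Transition n)}
    (htr : ConstrainedTrace σ0 tr σ) (h0 : isInitial σ0) (hni : ¬ isInitial σ) :
    consistent σ := by
  induction htr with
  | nil => exact absurd h0 hni
  | snoc tr σ i inp σ' out htr hstep ih =>
    by_cases hσ : isInitial σ
    · exact consistent_congr (CStep.obs_eq hstep)
        ((CStep.constraint hstep).1 (hσ i))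
    · exact consistent_congr (CStep.obs_eq hstep) (ih hσ)

/-- For every valid non-initial composite state of the asynchronous
muddy-children protocol, the consistency predicate holds. -/
theorem muddy_valid_state_consistent (n : ℕ) (hn : 1 ≤ n)
    (σ0 σ : CState n) (tr : List (Transition n))
    (htr : ValidTrace σ0 tr σ) (hni : ¬ isInitial σ) :
    consistent σ :=
  consistent_of_trace htr.2.1 htr.1 hni
end

section
/- (Termination) In any valid composite state of the asynchronous muddy-children protocol, no child's round number exceeds the number of muddy children they see: for every component i in a running state ⟨Obs_i, r_i, status_i⟩, r_i ≤ |Obs_i|. -/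
open Status ChildState

/-- Termination: in any valid composite state, no child's round number exceeds
the number of muddy children they see. -/
theorem muddy_termination (n : ℕ) (hn : 1 ≤ n)
    (σ0 σ : CState n) (tr : List (Transition n))
    (htr : ValidTrace σ0 tr σ) :
    ∀ (i : Fin n) (O : Finset (Fin n)) (r : ℕ) (s : Status),
      σ i = ChildState.run O r s → r ≤ O.card := by
  obtain ⟨h0, hct, -⟩ := htr
  induction hct with
  | nil =>
    intro i O r s h
    obtain ⟨O', hO'⟩ := h0 i
    rw [hO'] at h; cases h
  | snoc tr' σ' i inp σ'' out htr' hstep ih =>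
    intro j O r s h
    cases hstep with
    | mk _ s' hl hc =>
      by_cases hij : j = i
      · subst hij
        rw [Function.update_self] at h
        generalize hpre : σ' j = pre at hl
        cases hl with
        | init_nonempty O₀ hO => cases h; exact Nat.zero_le _
        | init_empty O₀ hO => cases h; exact Nat.zero_le _
        | emit O₀ r₀ s₀ =>
          cases h
          exact ih j _ _ _ hpre
        | recv_decided O₀ r₀ s₀ mg hs =>
          cases h
          exact ih j _ _ _ hpre
        | recv_c_eq O₀ r₀ j' r' hj hr =>
          cases h; omega
        | recv_c_succ O₀ r₀ j' r' hj hr =>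
          cases h; omega
        | recv_m_eq O₀ r₀ j' r' hj hr =>
          cases h; omega
        | recv_m_pred O₀ r₀ j' r' hj hr =>
          cases h
          have : 0 < O.card := Finset.card_pos.mpr ⟨j', hj⟩
          omega
        | recv_u_in_lt O₀ r₀ j' r' hj hr =>
          cases h
          exact ih j _ _ _ hpre
        | recv_u_in_mid O₀ r₀ j' r' hj h1 h2 =>
          cases h; omega
        | recv_u_in_top O₀ r₀ j' r' hj hr =>
          cases h
          have : 0 < O.card := Finset.card_pos.mpr ⟨j', hj⟩
          omega
        | recv_u_out_le O₀ r₀ j' r' hj hr =>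
          cases h
          exact ih j _ _ _ hpre
        | recv_u_out_mid O₀ r₀ j' r' hj h1 h2 =>
          cases h; omega
        | recv_u_out_top O₀ r₀ j' r' hj hr =>
          cases h; omega
      · rw [Function.update_of_ne hij] at h
        exact ih j O r s h
end

section
/- Define T_0 := {s : muddy(s) ≥ 1} (the state set after the father's announcement) and T_{j+1} := U(T_j). Then for every j ∈ ℕ, T_j = {s : muddy(s) ≥ j + 1}; in particular, after j rounds in which all children answer "No", all states with at most j muddy children are eliminated. -/
/-- Indistinguishability for child i: the two states agree everywhere except
possibly at i. -/
def ksim (n : ℕ) (i : Fin n) (s t : Fin n → Bool) : Prop :=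
  ∀ j : Fin n, j ≠ i → s j = t j

/-- Child i knows their own status at s relative to the set of states T. -/
def knows (n : ℕ) (T : Set (Fin n → Bool)) (i : Fin n) (s : Fin n → Bool) : Prop :=
  ∀ t ∈ T, ksim n i s t → t i = s i

/-- The announcement-update of T: states of T at which no child knows their
own status relative to T. -/
def announceUpdate (n : ℕ) (T : Set (Fin n → Bool)) : Set (Fin n → Bool) :=
  {s ∈ T | ∀ i : Fin n, ¬ knows n T i s}

/-- The number of muddy children in state s. -/
def muddy (n : ℕ) (s : Fin n → Bool) : ℕ :=
  (Finset.univ.filter fun i : Fin n => s i = true).card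

lemma muddy_update_true (n : ℕ) (s : Fin n → Bool) (i : Fin n) :
    muddy n (Function.update s i true)
      = (insert i (Finset.univ.filter fun j : Fin n => s j = true)).card := by
  unfold muddy
  congr 1
  ext j
  by_cases h : j = i <;> simp [Function.update, h]

lemma muddy_update_false (n : ℕ) (s : Fin n → Bool) (i : Fin n) :
    muddy n (Function.update s i false)
      = ((Finset.univ.filter fun j : Fin n => s j = true).erase i).card := by
  unfold muddy
  congr 1
  ext j
  by_cases h : j = i <;> simp [Function.update, h]

lemma ksim_update (n : ℕ) (i : Fin n) (s : Fin n → Bool) (b : Bool) :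
    ksim n i s (Function.update s i b) := by
  intro j hj; simp [Function.update, hj]

/-- After the father's announcement T 0 = {s | muddy(s) ≥ 1} and j rounds of
"No" answers, exactly the states with at least j + 1 muddy children remain. -/
theorem muddy_rounds_eliminate (n : ℕ) (T : ℕ → Set (Fin n → Bool))
    (h0 : T 0 = {s | 1 ≤ muddy n s})
    (hS : ∀ j : ℕ, T (j + 1) = announceUpdate n (T j)) :
    ∀ j : ℕ, T j = {s | j + 1 ≤ muddy n s} := by
  intro j
  induction j with
  | zero => simpa using h0
  | succ j ih =>
    rw [hS j, ih]
    ext s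
    simp only [announceUpdate, Set.mem_setOf_eq, Set.mem_sep_iff]
    constructor
    · rintro ⟨hs, hk⟩
      rcases eq_or_lt_of_le hs with heq | hlt
      · -- muddy s = j+1, some muddy child knows
        exfalso
        have hpos : 0 < muddy n s := by omega
        obtain ⟨i, hi⟩ : ∃ i, s i = true := by
          by_contra h
          push_neg at h
          have : muddy n s = 0 := by
            unfold muddy
            simp only [Finset.card_eq_zero, Finset.filter_eq_empty_iff]
            intro x _
            simp [h x]
          omega
        apply hk i
        intro t ht hsim
        by_contra hne
        have hti : t i = false := by
          cases h : t i <;> simp_all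
        -- t agrees with update s i false
        have htu : t = Function.update s i false := by
          funext x
          by_cases hx : x = i
          · simp [hx, Function.update, hti]
          · simp [Function.update, hx, (hsim x hx).symm]
        rw [Set.mem_setOf_eq, htu, muddy_update_false] at ht
        have hmem : i ∈ Finset.univ.filter fun j : Fin n => s j = true := by
          simp [hi]
        have := Finset.card_erase_of_mem hmem
        unfold muddy at heq
        omega
      · -- muddy s ≥ j+2
        exact hlt
    · intro hs
      refine ⟨by omega, fun i hknows => ?_⟩
      cases hi : s i with
      | true =>
        -- flip to false: muddy ≥ j+1 still
        have ht := hknows (Function.update s i false) ?_ (ksim_update n i s false)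
        · simp [Function.update, hi] at ht
        · rw [Set.mem_setOf_eq, muddy_update_false]
          have hmem : i ∈ Finset.univ.filter fun j : Fin n => s j = true := by
            simp [hi]
          have := Finset.card_erase_of_mem hmem
          unfold muddy at hs
          omega
      | false =>
        have ht := hknows (Function.update s i true) ?_ (ksim_update n i s true)
        · simp [Function.update, hi] at ht
        · rw [Set.mem_setOf_eq, muddy_update_true]
          have := Finset.card_le_card (Finset.subset_insert i (Finset.univ.filter fun j : Fin n => s j = true))
          unfold muddy at hs
          omega
end

section
/- (Message invariant) Let σ₀ be a consistent initial composite state of the asynchronous muddy-children protocol with muddy set M and N = |M|, and let ⟨j, r, status⟩ be any message emitted by a valid trace starting from σ₀. Then: if status = u then r < |Obs_j| (so child j knows there are more than r muddy children); if status = m then r = |Obs_j| = N − 1; and if status = c then r = |Obs_j| = N; in particular, any message with status ≠ u reports the exact number of muddy children its sender sees. -/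
open Status ChildState

section Aux

variable {n : ℕ} (σ0 : CState n)

/-- The invariant on messages. -/
def MsgInv (mg : Msg n) : Prop :=
  (mg.status = Status.u → mg.round < ((σ0 mg.sender).obs).card) ∧
  (mg.status = Status.m → mg.round = ((σ0 mg.sender).obs).card ∧
      ((σ0 mg.sender).obs).card = (muddySet σ0).card - 1) ∧
  (mg.status = Status.c → mg.round = ((σ0 mg.sender).obs).card ∧
      ((σ0 mg.sender).obs).card = (muddySet σ0).card)

/-- The invariant on running states of child `i`. -/
def RunInv (i : Fin n) (O : Finset (Fin n)) (r : ℕ) (st : Status) : Prop :=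
  O = (σ0 i).obs ∧
  (st = Status.u → r < O.card) ∧
  (st = Status.m → r = O.card ∧ O.card = (muddySet σ0).card - 1) ∧
  (st = Status.c → r = O.card ∧ O.card = (muddySet σ0).card)

/-- The invariant on states of child `i`. -/
def StInv (i : Fin n) : ChildState n → Prop
  | .start O => O = (σ0 i).obs
  | .run O r st => RunInv σ0 i O r st

lemma mem_obs (hc : consistent σ0) (i j : Fin n) :
    j ∈ (σ0 i).obs ↔ j ∈ muddySet σ0 ∧ j ≠ i := by
  rw [hc.2 i]; simp [Finset.mem_sdiff]

lemma card_obs_mem (hc : consistent σ0) {i : Fin n} (h : i ∈ muddySet σ0) :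
    ((σ0 i).obs).card = (muddySet σ0).card - 1 := by
  rw [hc.2 i, Finset.sdiff_singleton_eq_erase, Finset.card_erase_of_mem h]

lemma card_obs_notMem (hc : consistent σ0) {i : Fin n} (h : i ∉ muddySet σ0) :
    ((σ0 i).obs).card = (muddySet σ0).card := by
  rw [hc.2 i, Finset.sdiff_singleton_eq_erase, Finset.erase_eq_of_notMem h]

lemma one_le_N (hc : consistent σ0) : 1 ≤ (muddySet σ0).card :=
  Finset.card_pos.2 hc.1

/-- Core lemma: local steps preserve the state invariant and produce
invariant-satisfying outputs, provided inputs satisfy the invariant. -/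
lemma local_inv (hc : consistent σ0) (i : Fin n) (s : ChildState n)
    (inp : Option (Msg n)) (s' : ChildState n) (out : Option (Msg n))
    (hl : LocalStep i s inp s' out) (hs : StInv σ0 i s)
    (hin : ∀ mg, inp = some mg → MsgInv σ0 mg) :
    StInv σ0 i s' ∧ ∀ mg, out = some mg → MsgInv σ0 mg := by
  have hN1 : 1 ≤ (muddySet σ0).card := one_le_N σ0 hc
  cases hl with
  | init_nonempty O h =>
    have hO : O = (σ0 i).obs := hs
    have hcard : 0 < O.card := Finset.card_pos.2 (Finset.nonempty_iff_ne_empty.2 h)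
    exact ⟨⟨hO, fun _ => hcard, by simp, by simp⟩, by simp⟩
  | init_empty O h =>
    have hO : O = (σ0 i).obs := hs
    have hM : muddySet σ0 = {i} := by
      have h1 : muddySet σ0 \ {i} = ∅ := by rw [← hc.2 i, ← hO, h]
      have h2 : muddySet σ0 ⊆ {i} := by
        intro x hx
        by_contra hxi
        have : x ∈ muddySet σ0 \ {i} := Finset.mem_sdiff.2 ⟨hx, hxi⟩
        simp [h1] at this
      exact Finset.Subset.antisymm h2 (by
        obtain ⟨y, hy⟩ := hc.1
        have hyi : y = i := by have := h2 hy; simpa using this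
        intro x hx
        simp at hx; subst hx; subst hyi; exact hy)
    have hcard : O.card = 0 := by simp [h]
    have hNcard : (muddySet σ0).card = 1 := by simp [hM]
    exact ⟨⟨hO, by simp, fun _ => by omega, by simp⟩, by simp⟩
  | emit O r s =>
    obtain ⟨hO, hu, hm, hcl⟩ := hs
    refine ⟨⟨hO, hu, hm, hcl⟩, fun mg hmg => ?_⟩
    cases hmg
    exact ⟨fun h => hO ▸ hu h, fun h => hO ▸ hm h, fun h => hO ▸ hcl h⟩
  | recv_decided O r s mg h => exact ⟨hs, by simp⟩
  | recv_c_eq O r j r' hj hr =>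
    obtain ⟨hO, _, _, _⟩ := hs
    have e1 : r' = ((σ0 j).obs).card := ((hin _ rfl).2.2 rfl).1
    have e2 : ((σ0 j).obs).card = (muddySet σ0).card := ((hin _ rfl).2.2 rfl).2
    exact ⟨⟨hO, by simp, by simp, fun _ => ⟨hr, by omega⟩⟩, by simp⟩
  | recv_c_succ O r j r' hj hr =>
    obtain ⟨hO, _, _, _⟩ := hs
    have e1 : r' = ((σ0 j).obs).card := ((hin _ rfl).2.2 rfl).1
    have e2 : ((σ0 j).obs).card = (muddySet σ0).card := ((hin _ rfl).2.2 rfl).2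
    exact ⟨⟨hO, by simp, fun _ => by omega, by simp⟩, by simp⟩
  | recv_m_eq O r j r' hj hr =>
    obtain ⟨hO, _, _, _⟩ := hs
    have e1 : r' = ((σ0 j).obs).card := ((hin _ rfl).2.1 rfl).1
    have e2 : ((σ0 j).obs).card = (muddySet σ0).card - 1 := ((hin _ rfl).2.1 rfl).2
    exact ⟨⟨hO, by simp, fun _ => ⟨hr, by omega⟩, by simp⟩, by simp⟩
  | recv_m_pred O r j r' hj hr =>
    obtain ⟨hO, _, _, _⟩ := hs
    have e1 : r' = ((σ0 j).obs).card := ((hin _ rfl).2.1 rfl).1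
    have e2 : ((σ0 j).obs).card = (muddySet σ0).card - 1 := ((hin _ rfl).2.1 rfl).2
    have hOpos : 0 < O.card := Finset.card_pos.2 ⟨j, hj⟩
    have hOcard : O.card = (muddySet σ0).card := by
      by_cases hi : i ∈ muddySet σ0
      · have := card_obs_mem σ0 hc hi
        rw [← hO] at this
        omega
      · have := card_obs_notMem σ0 hc hi
        rw [← hO] at this
        omega
    exact ⟨⟨hO, by simp, by simp, fun _ => by omega⟩, by simp⟩
  | recv_u_in_lt O r j r' hj hr => exact ⟨hs, by simp⟩
  | recv_u_in_mid O r j r' hj h1 h2 =>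
    obtain ⟨hO, _, _, _⟩ := hs
    have hOpos : 0 < O.card := Finset.card_pos.2 ⟨j, hj⟩
    exact ⟨⟨hO, fun _ => by omega, by simp, by simp⟩, by simp⟩
  | recv_u_in_top O r j r' hj hr =>
    obtain ⟨hO, _, _, _⟩ := hs
    have hjM : j ∈ muddySet σ0 ∧ j ≠ i := (mem_obs σ0 hc i j).1 (hO ▸ hj)
    have hmv : r' < ((σ0 j).obs).card := (hin _ rfl).1 rfl
    have hjcard := card_obs_mem σ0 hc hjM.1
    rw [hjcard] at hmv
    have hOpos : 0 < O.card := Finset.card_pos.2 ⟨j, hj⟩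
    have hOcard : O.card = (muddySet σ0).card - 1 := by
      by_cases hi : i ∈ muddySet σ0
      · have := card_obs_mem σ0 hc hi; rw [← hO] at this; omega
      · have := card_obs_notMem σ0 hc hi; rw [← hO] at this; omega
    exact ⟨⟨hO, by simp, fun _ => by omega, by simp⟩, by simp⟩
  | recv_u_out_le O r j r' hj hr => exact ⟨hs, by simp⟩
  | recv_u_out_mid O r j r' hj h1 h2 =>
    obtain ⟨hO, _, _, _⟩ := hs
    exact ⟨⟨hO, fun _ => h2, by simp, by simp⟩, by simp⟩
  | recv_u_out_top O r j r' hj hr =>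
    obtain ⟨hO, _, _, _⟩ := hs
    have hmv : r' < ((σ0 j).obs).card := (hin _ rfl).1 rfl
    have hji : j ∉ muddySet σ0 ∨ j = i := by
      have := (mem_obs σ0 hc i j).not.1 (hO ▸ hj)
      tauto
    have hOcard : O.card = (muddySet σ0).card - 1 := by
      rcases hji with hjM | hji
      · have hjcard := card_obs_notMem σ0 hc hjM
        simp only [hjcard] at hmv
        by_cases hi : i ∈ muddySet σ0
        · have := card_obs_mem σ0 hc hi; rw [← hO] at this; omega
        · have := card_obs_notMem σ0 hc hi; rw [← hO] at this; omega
      · subst hji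
        rw [← hO] at hmv
        omega
    exact ⟨⟨hO, by simp, fun _ => ⟨hr, hOcard⟩, by simp⟩, by simp⟩

/-- Composite steps preserve the state invariant and produce
invariant-satisfying outputs. -/
lemma step_inv (hc : consistent σ0) (σ : CState n) (i : Fin n)
    (inp : Option (Msg n)) (σ' : CState n) (out : Option (Msg n))
    (hs : CStep σ i inp σ' out) (hσ : ∀ k, StInv σ0 k (σ k))
    (hin : ∀ mg, inp = some mg → MsgInv σ0 mg) :
    (∀ k, StInv σ0 k (σ' k)) ∧ ∀ mg, out = some mg → MsgInv σ0 mg := by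
  cases hs with
  | mk a b c d =>
    obtain ⟨hs', hout⟩ := local_inv σ0 hc i (σ i) inp a out c (hσ i) hin
    refine ⟨fun k => ?_, hout⟩
    by_cases hk : k = i
    · subst hk; simpa using hs'
    · simpa [Function.update_of_ne hk] using hσ k

/-- Trace invariant. -/
lemma trace_inv (hc : consistent σ0) (h0 : isInitial σ0)
    (tr : List (Transition n)) (σ : CState n)
    (hct : ConstrainedTrace σ0 tr σ)
    (hin : ∀ mg, isInput tr mg → MsgInv σ0 mg) :
    (∀ k, StInv σ0 k (σ k)) ∧ ∀ mg, emits tr mg → MsgInv σ0 mg := by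
  induction hct with
  | nil =>
    refine ⟨fun k => ?_, fun mg hmg => ?_⟩
    · obtain ⟨O, hO⟩ := h0 k
      rw [hO]
      show O = (σ0 k).obs
      rw [hO]; rfl
    · obtain ⟨i, inp, hmem⟩ := hmg
      simp at hmem
  | snoc tr σ i inp σ' out htr hstep ih =>
    have hin' : ∀ mg, isInput tr mg → MsgInv σ0 mg := by
      intro mg ⟨k, o, hmem⟩
      exact hin mg ⟨k, o, List.mem_append.2 (Or.inl hmem)⟩
    obtain ⟨hσ, hemit⟩ := ih hin'
    have hinp : ∀ mg, inp = some mg → MsgInv σ0 mg := by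
      intro mg hmg
      exact hin mg ⟨i, out, List.mem_append.2 (Or.inr (by simp [hmg]))⟩
    obtain ⟨hσ', hout⟩ := step_inv σ0 hc σ i inp σ' out hstep hσ hinp
    refine ⟨hσ', fun mg ⟨k, o, hmem⟩ => ?_⟩
    rcases List.mem_append.1 hmem with h | h
    · exact hemit mg ⟨k, o, h⟩
    · simp at h
      obtain ⟨hk, ho, hO⟩ := h
      exact hout mg (by rw [hO])

/-- Every valid message satisfies the invariant. -/
lemma validMsg_inv (hc : consistent σ0) (mg : Msg n)
    (hv : ValidMsg σ0 mg) : MsgInv σ0 mg := by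
  induction hv with
  | intro mg tr σ h0 hct hin hem ih =>
    exact (trace_inv σ0 hc h0 tr σ hct ih).2 mg hem

end Aux

/-- Message invariant: any message emitted by a valid trace from a consistent
initial state with N muddy children satisfies: unknown-status messages carry a
round below the number |Obs_j| of muddy children their sender sees, and
muddy/clean-status messages carry exactly round |Obs_j| with
|Obs_j| = N − 1 / |Obs_j| = N respectively. -/
theorem muddy_message_invariant (n : ℕ) (hn : 1 ≤ n)
    (σ0 : CState n) (h0 : isInitial σ0) (hc : consistent σ0)
    (N : ℕ) (hN : N = (muddySet σ0).card)
    (tr : List (Transition n)) (σ : CState n)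
    (htr : ValidTrace σ0 tr σ) (mg : Msg n) (hem : emits tr mg) :
    (mg.status = Status.u → mg.round < ((σ0 mg.sender).obs).card) ∧
    (mg.status = Status.m →
      mg.round = ((σ0 mg.sender).obs).card ∧ ((σ0 mg.sender).obs).card = N - 1) ∧
    (mg.status = Status.c →
      mg.round = ((σ0 mg.sender).obs).card ∧ ((σ0 mg.sender).obs).card = N) := by
  subst hN
  obtain ⟨h0', hct, hvin⟩ := htr
  have hin : ∀ mg', isInput tr mg' → MsgInv σ0 mg' := fun mg' h =>
    validMsg_inv σ0 hc mg' (hvin mg' h)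
  exact (trace_inv σ0 hc h0 tr σ hct hin).2 mg hem
end
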